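/- arXiv:1602.02955 — 9 statements merged into one kernel-verified Lean document; each statement's English description precedes it below -/
import Mathlib

section
/- If R : so(g) → so(g) is symmetric with respect to the trace form ⟨X,Y⟩ = tr(XY) and satisfies [R(X), A] = [X, B] for all X ∈ so(g), where A, B are g-symmetric matrices, then A and B commute. -/
/-!
The commutator `C = [A, B]` is skew. Writing `X' := R X`, for skew `X` the relation
`[X', A] = [X, B]` and invariance of the trace form give
`tr (C X) = tr (A [B, X]) = -tr (A [X', A]) = 0`.
So `C` is trace-orthogonal to all of `so(g)`; testing against the skew rank-two maps
`x ↦ g(a, x) b - g(b, x) a` yields `2 g(a, C b) = 0`, hence `C = 0` by nondegeneracy.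
-/

namespace LinearMap

variable {R M : Type*} [CommRing R] [AddCommGroup M] [Module R M]

theorem trace_lie_mul_eq_zero_of_lie_eq [Module.Free R M] [Module.Finite R M]
    {A B X Y : Module.End R M} (h : ⁅X, A⁆ = ⁅Y, B⁆) : trace R M (⁅A, B⁆ * Y) = 0 := by
  have h' : ⁅B, Y⁆ = -⁅X, A⁆ := by rw [h, Ring.lie_def, Ring.lie_def, neg_sub]
  rw [trace_lie_mul_eq, h', mul_neg, map_neg, Ring.lie_def, mul_sub, map_sub, trace_mul_cycle',
    sub_self, neg_zero]

theorem mul_smulRight (C : Module.End R M) (f : M →ₗ[R] R) (v : M) :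
    C * f.smulRight v = f.smulRight (C v) := by
  ext
  simp

theorem isSkewAdjoint_iff_apply_eq_neg {B : LinearMap.BilinForm R M} {f : Module.End R M} :
    IsSkewAdjoint B f ↔ ∀ x y, B (f x) y = -B x (f y) := by
  simp only [IsSkewAdjoint, IsAdjointPair, Pi.neg_apply, map_neg]

theorem isSkewAdjoint_lie_of_isSelfAdjoint {B : LinearMap.BilinForm R M}
    {f g : Module.End R M} (hf : B.IsSelfAdjoint f) (hg : B.IsSelfAdjoint g) :
    IsSkewAdjoint B (⁅f, g⁆ : Module.End R M) := by
  rw [isSkewAdjoint_iff_apply_eq_neg]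
  intro x y
  simp only [Ring.lie_def, sub_apply, Module.End.mul_apply, map_sub, hf _, hg _]
  abel

theorem IsSkewAdjoint.eq_zero_of_trace_mul_eq_zero [Module.Free R M] [Module.Finite R M]
    {B : LinearMap.BilinForm R M} (hB : B.IsSymm) (hB' : B.SeparatingRight)
    (h2 : IsLeftRegular (2 : R)) {C : Module.End R M} (hC : IsSkewAdjoint B C)
    (h : ∀ Y : Module.End R M, IsSkewAdjoint B Y → trace R M (C * Y) = 0) : C = 0 := by
  rw [isSkewAdjoint_iff_apply_eq_neg] at hC
  ext b
  refine hB' _ fun a ↦ h2 ?_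
  have hY : IsSkewAdjoint B ((B a).smulRight b - (B b).smulRight a : Module.End R M) := by
    rw [isSkewAdjoint_iff_apply_eq_neg]
    intro x y
    simp only [sub_apply, smulRight_apply, map_sub, map_smul, LinearMap.smul_apply, smul_eq_mul,
      hB.eq x a, hB.eq x b]
    ring
  have hBC : B b (C a) = -B a (C b) := by rw [hB.eq, hC]
  have htr := h _ hY
  rw [mul_sub, map_sub, mul_smulRight, mul_smulRight, trace_smulRight, trace_smulRight,
    hBC] at htr
  simp only [mul_zero]
  linear_combination htr

end LinearMap

theorem stmt_0_general {V : Type*} [AddCommGroup V] [Module ℝ V] [FiniteDimensional ℝ V]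
    (g : LinearMap.BilinForm ℝ V) (hgnd : g.Nondegenerate) (hgsymm : g.IsSymm)
    (A B : Module.End ℝ V)
    (hA : ∀ u v : V, g (A u) v = g u (A v))
    (hB : ∀ u v : V, g (B u) v = g u (B v))
    (R : Module.End ℝ V → Module.End ℝ V)
    (hsect : ∀ X : Module.End ℝ V,
        (∀ u v : V, g (X u) v = - g u (X v)) → ⁅R X, A⁆ = ⁅X, B⁆) :
    A * B = B * A := by
  have hC := LinearMap.isSkewAdjoint_lie_of_isSelfAdjoint (B := g) hA hB
  have hC0 : ⁅A, B⁆ = 0 :=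
    hC.eq_zero_of_trace_mul_eq_zero hgsymm hgnd.2 (IsRegular.of_ne_zero two_ne_zero).left
      fun Y hY ↦ LinearMap.trace_lie_mul_eq_zero_of_lie_eq
        (hsect Y (LinearMap.isSkewAdjoint_iff_apply_eq_neg.mp hY))
  rwa [Ring.lie_def, sub_eq_zero] at hC0

/-- If `R : so(g) → so(g)` is symmetric w.r.t. the trace form and satisfies
`[R(X), A] = [X, B]` for all `X ∈ so(g)`, with `A, B` `g`-symmetric, then `A` and `B` commute. -/
theorem stmt_0 {V : Type*} [AddCommGroup V] [Module ℝ V] [FiniteDimensional ℝ V]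
    (g : LinearMap.BilinForm ℝ V) (hgnd : g.Nondegenerate) (hgsymm : g.IsSymm)
    (A B : Module.End ℝ V)
    (hA : ∀ u v : V, g (A u) v = g u (A v))
    (hB : ∀ u v : V, g (B u) v = g u (B v))
    (R : Module.End ℝ V → Module.End ℝ V)
    (hRso : ∀ X : Module.End ℝ V, (∀ u v : V, g (X u) v = - g u (X v)) →
        (∀ u v : V, g (R X u) v = - g u (R X v)))
    (hRsymm : ∀ X Y : Module.End ℝ V,
        (∀ u v : V, g (X u) v = - g u (X v)) →
        (∀ u v : V, g (Y u) v = - g u (Y v)) →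
        LinearMap.trace ℝ V (R X * Y) = LinearMap.trace ℝ V (X * R Y))
    (hsect : ∀ X : Module.End ℝ V,
        (∀ u v : V, g (X u) v = - g u (X v)) → ⁅R X, A⁆ = ⁅X, B⁆) :
    A * B = B * A :=
  stmt_0_general g hgnd hgsymm A B hA hB R hsect
end

section
/- Let A be g-symmetric, p a polynomial, and R₀(X) = d/dt|_{t=0} p(A + tX). Under the identification u ∧ v ↦ u ⊗ g(v) − v ⊗ g(u) of Λ²V with so(g), R₀ satisfies the Bianchi identity: R₀(u∧v)w + R₀(v∧w)u + R₀(w∧u)v = 0 for all u, v, w ∈ V. -/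
/-- The bivector `u ∧ v`, identified with the endomorphism `x ↦ u·g(v,x) − v·g(u,x)`. -/
noncomputable def wedge {V : Type*} [AddCommGroup V] [Module ℝ V]
    (g : LinearMap.BilinForm ℝ V) (u v : V) : Module.End ℝ V :=
  (g v).smulRight u - (g u).smulRight v

/-- `R₀(X) = d/dt|₀ p(A + tX)`, given by the explicit formula
`p(t) = tᵏ ↦ Σ_{j<k} A^(k-1-j) X A^j`, extended linearly in `p`. -/
noncomputable def R0 {V : Type*} [AddCommGroup V] [Module ℝ V]
    (p : Polynomial ℝ) (A X : Module.End ℝ V) : Module.End ℝ V :=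
  p.sum fun k c => c • ∑ j ∈ Finset.range k, A ^ (k - 1 - j) * X * A ^ j

/-!
Every term of `R₀(u ∧ v) w` has the form `Aᵃ ((u ∧ v) (Aᵇ w))`, so it suffices that
`(u ∧ v)(C w) + (v ∧ w)(C u) + (w ∧ u)(C v) = 0` for each power `C = Aᵇ`. Since `A` is
`g`-self-adjoint, so is `C`, and with `g` symmetric the six terms `u · g(v, C w) − v · g(u, C w) + …`
cancel in pairs.
-/

open Finset

theorem LinearMap.IsAdjointPair.pow {R M N : Type*} [CommSemiring R] [AddCommMonoid M]
    [Module R M] [AddCommMonoid N] [Module R N] {B : M →ₗ[R] M →ₗ[R] N}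
    {f g : Module.End R M} (h : IsAdjointPair B B f g) (n : ℕ) :
    IsAdjointPair B B ⇑(f ^ n) ⇑(g ^ n) := by
  induction n with
  | zero => exact isAdjointPair_one
  | succ n ih => rw [pow_succ, pow_succ']; exact ih.mul h

section

variable {V : Type*} [AddCommGroup V] [Module ℝ V]

theorem wedge_apply_add_wedge_apply_add_wedge_apply {g : LinearMap.BilinForm ℝ V}
    (hg : g.IsSymm) {C : Module.End ℝ V} (hC : LinearMap.IsSelfAdjoint g C) (u v w : V) :
    wedge g u v (C w) + wedge g v w (C u) + wedge g w u (C v) = 0 := by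
  have hswap : ∀ x y, g x (C y) = g y (C x) := fun x y => by rw [← hC, hg.eq]
  simp only [wedge, LinearMap.sub_apply, LinearMap.smulRight_apply]
  rw [hswap v w, hswap u w, hswap u v]
  abel

theorem R0_apply_add_R0_apply_add_R0_apply_eq_zero (p : Polynomial ℝ) {A X Y Z : Module.End ℝ V}
    {x y z : V} (h : ∀ j : ℕ, X ((A ^ j) x) + Y ((A ^ j) y) + Z ((A ^ j) z) = 0) :
    R0 p A X x + R0 p A Y y + R0 p A Z z = 0 := by
  simp only [R0, Polynomial.sum, LinearMap.sum_apply, LinearMap.smul_apply,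
    Module.End.mul_apply, ← sum_add_distrib, ← smul_add, ← map_add, h, map_zero, sum_const_zero,
    smul_zero]

end

theorem stmt_9_general {V : Type*} [AddCommGroup V] [Module ℝ V]
    (g : LinearMap.BilinForm ℝ V) (hgsymm : g.IsSymm)
    (A : Module.End ℝ V) (hA : ∀ u v : V, g (A u) v = g u (A v))
    (p : Polynomial ℝ) :
    ∀ u v w : V,
      R0 p A (wedge g u v) w + R0 p A (wedge g v w) u + R0 p A (wedge g w u) v = 0 :=
  fun u v w => R0_apply_add_R0_apply_add_R0_apply_eq_zero p fun j =>
    wedge_apply_add_wedge_apply_add_wedge_apply hgsymm (LinearMap.IsAdjointPair.pow hA j) u v w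

/-- For a `g`-symmetric `A`, `R₀` satisfies the Bianchi identity. -/
theorem stmt_9 {V : Type*} [AddCommGroup V] [Module ℝ V] [FiniteDimensional ℝ V]
    (g : LinearMap.BilinForm ℝ V) (hgnd : g.Nondegenerate) (hgsymm : g.IsSymm)
    (A : Module.End ℝ V) (hA : ∀ u v : V, g (A u) v = g u (A v))
    (p : Polynomial ℝ) :
    ∀ u v w : V,
      R0 p A (wedge g u v) w + R0 p A (wedge g v w) u + R0 p A (wedge g w u) v = 0 :=
  stmt_9_general g hgsymm A hA p
end

section
/- If p is a polynomial with p(A) = 0 (e.g. the minimal polynomial of A), then the image of R₀(X) = d/dt|_{t=0} p(A + tX) is contained in the centralizer of A: [R₀(X), A] = 0 for all X. -/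
/-!
Bracketing with `A` telescopes each monomial term of `R₀`:
`⁅Σ_{j<k} A^(k-1-j) X A^j, A⁆ = ⁅X, A^k⁆`. Summing over the coefficients of `p` gives
`⁅R₀(X), A⁆ = ⁅X, p(A)⁆`, which vanishes when `p(A) = 0`.
-/

open Finset

theorem sum_pow_mul_mul_pow_lie {R : Type*} [Ring R] (a x : R) (k : ℕ) :
    ⁅∑ j ∈ range k, a ^ (k - 1 - j) * x * a ^ j, a⁆ = ⁅x, a ^ k⁆ := by
  have hterm : ∀ j ∈ range k,
      a ^ (k - 1 - j) * x * a ^ j * a - a * (a ^ (k - 1 - j) * x * a ^ j) =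
        a ^ (k - (j + 1)) * x * a ^ (j + 1) - a ^ (k - j) * x * a ^ j := by
    intro j hj
    rw [show k - j = k - 1 - j + 1 by grind, show k - (j + 1) = k - 1 - j by omega,
      pow_succ' a (k - 1 - j), pow_succ a j]
    noncomm_ring
  rw [Ring.lie_def, sum_mul, mul_sum, ← sum_sub_distrib, sum_congr rfl hterm,
    sum_range_sub (fun j => a ^ (k - j) * x * a ^ j), Ring.lie_def]
  simp

theorem R0_lie {V : Type*} [AddCommGroup V] [Module ℝ V] (p : Polynomial ℝ)
    (A X : Module.End ℝ V) : ⁅R0 p A X, A⁆ = ⁅X, Polynomial.aeval A p⁆ := by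
  simp only [Ring.lie_def, R0, Polynomial.aeval_def, Polynomial.eval₂_eq_sum, Polynomial.sum,
    sum_mul, mul_sum, ← sum_sub_distrib, ← Algebra.smul_def]
  refine sum_congr rfl fun k _ => ?_
  rw [smul_mul_assoc, mul_smul_comm, mul_smul_comm, smul_mul_assoc, ← smul_sub, ← smul_sub,
    ← Ring.lie_def, sum_pow_mul_mul_pow_lie, Ring.lie_def]

theorem stmt_10_general {V : Type*} [AddCommGroup V] [Module ℝ V]
    (A : Module.End ℝ V) (p : Polynomial ℝ)
    (hp : Polynomial.aeval A p = 0) :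
    ∀ X : Module.End ℝ V, ⁅R0 p A X, A⁆ = 0 := by
  intro X
  rw [R0_lie, hp, Ring.lie_def, mul_zero, zero_mul, sub_zero]

/-- If `p(A) = 0` then the image of `R₀` lies in the centralizer of `A`. -/
theorem stmt_10 {V : Type*} [AddCommGroup V] [Module ℝ V] [FiniteDimensional ℝ V]
    (A : Module.End ℝ V) (p : Polynomial ℝ)
    (hp : Polynomial.aeval A p = 0) :
    ∀ X : Module.End ℝ V, ⁅R0 p A X, A⁆ = 0 :=
  stmt_10_general A p hp
end

section
/- Let n ≥ 1 and let A, A', B, B' be traceless symmetric n×n real (or complex) matrices. Suppose a symmetric operator R on skew-symmetric matrices satisfies [R(X), A] = [X, B] and [R(X), A'] = [X, B'] for all skew-symmetric X. Then [[A', y], B] = [[B', y], A] for every symmetric matrix y. -/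
open Matrix

lemma skew_nondeg {n : ℕ} (S : Matrix (Fin n) (Fin n) ℝ) (hS : Sᵀ = -S)
    (h : ∀ X : Matrix (Fin n) (Fin n) ℝ, Xᵀ = -X → (X * S).trace = 0) : S = 0 := by
  have h1 := h S hS
  have h2 : (Sᵀ * S).trace = 0 := by rw [hS, Matrix.neg_mul, Matrix.trace_neg, h1, neg_zero]
  have h3 : ∑ i, ∑ j, S j i * S j i = 0 := by
    simpa [Matrix.trace, Matrix.diag, Matrix.mul_apply, Matrix.transpose_apply] using h2
  ext i j
  have := (Finset.sum_eq_zero_iff_of_nonneg (fun i _ => Finset.sum_nonneg fun j _ => mul_self_nonneg _ : ∀ i ∈ Finset.univ,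
      0 ≤ ∑ j, S j i * S j i)).mp h3 j (Finset.mem_univ _)
  have := (Finset.sum_eq_zero_iff_of_nonneg (fun k _ => mul_self_nonneg _ : ∀ k ∈ Finset.univ,
      0 ≤ S k j * S k j)).mp this i (Finset.mem_univ _)
  have := mul_self_eq_zero.mp this
  simpa using this

lemma trace_mul_lie {n : ℕ} (P Q y : Matrix (Fin n) (Fin n) ℝ) :
    (P * ⁅Q, y⁆).trace = (⁅P, Q⁆ * y).trace := by
  simp only [Ring.lie_def, Matrix.mul_sub, Matrix.sub_mul, Matrix.trace_sub, ← Matrix.mul_assoc]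
  rw [Matrix.trace_mul_cycle P y Q]

lemma skew_comm {n : ℕ} (A y : Matrix (Fin n) (Fin n) ℝ) (hA : Aᵀ = A) (hy : yᵀ = y) :
    ⁅A, y⁆ᵀ = -⁅A, y⁆ := by
  simp only [Ring.lie_def, Matrix.transpose_sub, Matrix.transpose_mul, hA, hy]
  abel

lemma key {n : ℕ} (A B : Matrix (Fin n) (Fin n) ℝ) (hA : Aᵀ = A) (hB : Bᵀ = B)
    (R : Matrix (Fin n) (Fin n) ℝ → Matrix (Fin n) (Fin n) ℝ)
    (hRskew : ∀ X, Xᵀ = -X → (R X)ᵀ = -(R X))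
    (hRsymm : ∀ X Y, Xᵀ = -X → Yᵀ = -Y → (R X * Y).trace = (X * R Y).trace)
    (h1 : ∀ X, Xᵀ = -X → ⁅R X, A⁆ = ⁅X, B⁆)
    (y : Matrix (Fin n) (Fin n) ℝ) (hy : yᵀ = y) : R ⁅A, y⁆ = ⁅B, y⁆ := by
  have hAy := skew_comm A y hA hy
  have hBy := skew_comm B y hB hy
  have hS : (R ⁅A, y⁆ - ⁅B, y⁆)ᵀ = -(R ⁅A, y⁆ - ⁅B, y⁆) := by
    rw [Matrix.transpose_sub, hRskew _ hAy, hBy]; abel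
  have := skew_nondeg _ hS (fun X hX => by
    have e1 : (X * R ⁅A, y⁆).trace = (R X * ⁅A, y⁆).trace := (hRsymm X _ hX hAy).symm
    have e2 : (R X * ⁅A, y⁆).trace = (⁅R X, A⁆ * y).trace := trace_mul_lie _ _ _
    have e3 : (X * ⁅B, y⁆).trace = (⁅X, B⁆ * y).trace := trace_mul_lie _ _ _
    rw [Matrix.mul_sub, Matrix.trace_sub, e1, e2, h1 X hX, e3, sub_self])
  exact sub_eq_zero.mp this

/-- For traceless symmetric `A, A', B, B'` and a trace-symmetric operator `R` on
skew-symmetric matrices satisfying both sectional identities, one has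
`[[A', y], B] = [[B', y], A]` for every symmetric `y`. -/
theorem stmt_11 {n : ℕ} (hn : 1 ≤ n)
    (A A' B B' : Matrix (Fin n) (Fin n) ℝ)
    (hA : Aᵀ = A) (hA' : A'ᵀ = A') (hB : Bᵀ = B) (hB' : B'ᵀ = B')
    (htrA : A.trace = 0) (htrA' : A'.trace = 0)
    (htrB : B.trace = 0) (htrB' : B'.trace = 0)
    (R : Matrix (Fin n) (Fin n) ℝ → Matrix (Fin n) (Fin n) ℝ)
    (hRskew : ∀ X, Xᵀ = -X → (R X)ᵀ = -(R X))
    (hRsymm : ∀ X Y, Xᵀ = -X → Yᵀ = -Y → (R X * Y).trace = (X * R Y).trace)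
    (h1 : ∀ X, Xᵀ = -X → ⁅R X, A⁆ = ⁅X, B⁆)
    (h2 : ∀ X, Xᵀ = -X → ⁅R X, A'⁆ = ⁅X, B'⁆) :
    ∀ y : Matrix (Fin n) (Fin n) ℝ, yᵀ = y → ⁅⁅A', y⁆, B⁆ = ⁅⁅B', y⁆, A⁆ := by
  intro y hy
  have hkey : R ⁅A', y⁆ = ⁅B', y⁆ := key A' B' hA' hB' R hRskew hRsymm h2 y hy
  have hX := skew_comm A' y hA' hy
  have := h1 ⁅A', y⁆ hX
  rw [hkey] at this
  exact this.symm
end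

section
/- Let A, A', B, B' be symmetric n×n matrices such that [[A', y], B] = [[B', y], A] and [[A, y], B'] = [[B, y], A'] for all symmetric matrices y. Then [B, A'] = [A, B']. -/
open Matrix

/-!
Put `D = ⁅A', B⁆ + ⁅A, B'⁆`. By the Jacobi identity, `⁅D, y⁆` is the difference of the two sides
of the first hypothesis plus that of the second, so `D` commutes with every symmetric matrix; in
particular with the diagonal idempotents, which forces `D` to be diagonal. On the other hand `D` is
skew-symmetric because `A, A', B, B'` are symmetric, so its diagonal vanishes too. Hence `D = 0`,
which is the claim.
-/

theorem Ring.add_lie {R : Type*} [NonUnitalNonAssocRing R] (a b y : R) : ⁅a + b, y⁆ = ⁅a, y⁆ + ⁅b, y⁆ := by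
  simp only [Ring.lie_def, add_mul, mul_add]
  abel

theorem Ring.lie_lie_eq_lie_lie_sub_lie_lie {R : Type*} [Ring R] (a b y : R) :
    ⁅⁅a, b⁆, y⁆ = ⁅⁅a, y⁆, b⁆ - ⁅⁅b, y⁆, a⁆ := by
  simp only [Ring.lie_def]
  noncomm_ring

namespace Matrix

variable {n R : Type*} [Fintype n] [DecidableEq n]

theorem apply_eq_zero_of_commute_single [Ring R] {D : Matrix n n R} {i j : n} (hij : i ≠ j)
    (h : Commute (single i i (1 : R)) D) : D i j = 0 := by
  have := congrFun (congrFun h.eq i) j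
  rwa [single_mul_apply_same, one_mul, mul_single_apply_of_ne (hbj := Ne.symm hij)] at this

omit [Fintype n] [DecidableEq n] in
theorem diag_eq_zero_of_transpose_eq_neg [NonAssocRing R] [NoZeroDivisors R] [CharZero R]
    {D : Matrix n n R} (hD : Dᵀ = -D) (i : n) : D i i = 0 :=
  CharZero.eq_neg_self_iff.mp (congrFun (congrFun hD i) i)

theorem eq_zero_of_transpose_eq_neg_of_commute_isSymm [Ring R] [NoZeroDivisors R] [CharZero R]
    {D : Matrix n n R} (hD : Dᵀ = -D) (hcomm : ∀ y : Matrix n n R, y.IsSymm → Commute y D) :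
    D = 0 := by
  ext i j
  obtain rfl | hij := eq_or_ne i j
  · exact diag_eq_zero_of_transpose_eq_neg hD i
  · refine apply_eq_zero_of_commute_single hij (hcomm _ ?_)
    rw [← diagonal_single]
    exact isSymm_diagonal _

end Matrix

/-- If symmetric `A, A', B, B'` satisfy `[[A', y], B] = [[B', y], A]` and
`[[A, y], B'] = [[B, y], A']` for all symmetric `y`, then `[B, A'] = [A, B']`. -/
theorem stmt_12 {n : ℕ}
    (A A' B B' : Matrix (Fin n) (Fin n) ℝ)
    (hA : Aᵀ = A) (hA' : A'ᵀ = A') (hB : Bᵀ = B) (hB' : B'ᵀ = B')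
    (h1 : ∀ y : Matrix (Fin n) (Fin n) ℝ, yᵀ = y → ⁅⁅A', y⁆, B⁆ = ⁅⁅B', y⁆, A⁆)
    (h2 : ∀ y : Matrix (Fin n) (Fin n) ℝ, yᵀ = y → ⁅⁅A, y⁆, B'⁆ = ⁅⁅B, y⁆, A'⁆) :
    ⁅B, A'⁆ = ⁅A, B'⁆ := by
  set D := ⁅A', B⁆ + ⁅A, B'⁆ with hD
  have hskew : Dᵀ = -D := by
    rw [hD, transpose_add, lie_transpose, lie_transpose, hA, hA', hB, hB']
    simp only [Ring.lie_def]
    abel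
  have hcomm (y : Matrix (Fin n) (Fin n) ℝ) (hy : y.IsSymm) : Commute y D := by
    refine (commute_iff_lie_eq.mpr ?_).symm
    rw [hD, Ring.add_lie, Ring.lie_lie_eq_lie_lie_sub_lie_lie A' B,
      Ring.lie_lie_eq_lie_lie_sub_lie_lie A B', h1 y hy, h2 y hy]
    abel
  have hzero : D = 0 := eq_zero_of_transpose_eq_neg_of_commute_isSymm hskew hcomm
  calc ⁅B, A'⁆ = ⁅A, B'⁆ - D := by simp only [hD, Ring.lie_def]; abel
    _ = ⁅A, B'⁆ := by rw [hzero, sub_zero]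
end

section
/- Let A, A', B, B' be traceless symmetric n×n real matrices satisfying [[A', y], B] = [[B', y], A] for all symmetric y, and [B, A'] = [A, B']. Set T = AB' − BA'. Then T = 0, i.e. AB' = BA'. -/
/-!
Put `T = AB' - BA'`. The second hypothesis says that also `T = B'A - A'B`, so `T` is symmetric,
and expanding the double commutators turns the first one into
`Ty + yT = B'yA + AyB' - A'yB - ByA'` for every symmetric `y`.
Compose both sides with `X ↦ TX + XT` and take the trace of the resulting operators
`y ↦ f (y + yᵀ)` on all matrices, using `tr (y ↦ XyY) = tr X tr Y` and `tr (y ↦ Xyᵀ Y) = tr (XYᵀ)`.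
Tracelessness of `A, A', B, B'` kills every product of traces on the right, and what is left is
`n tr (T²) + (tr T)² = 0`. Since `tr (T²) = tr (TᵀT) ≥ 0` with equality only at `T = 0`, we are done.
-/

open Matrix

section Ring

variable {S : Type*} [Ring S] {a a' b b' : S}

theorem mul_sub_mul_eq_of_lie_eq (h : ⁅b, a'⁆ = ⁅a, b'⁆) :
    b' * a - a' * b = a * b' - b * a' := by
  rw [Ring.lie_def, Ring.lie_def] at h
  linear_combination (norm := abel) h

theorem mul_add_mul_eq_of_lie_lie_eq {y : S} (h : ⁅⁅a', y⁆, b⁆ = ⁅⁅b', y⁆, a⁆) :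
    (a * b' - b * a') * y + y * (b' * a - a' * b) =
      b' * y * a + a * y * b' - a' * y * b - b * y * a' := by
  simp only [Ring.lie_def] at h
  linear_combination (norm := noncomm_ring) h

end Ring

namespace Matrix

variable {ι R : Type*} [Fintype ι]

section SymmTrace

variable [DecidableEq ι]

theorem mul_single_one_mul_apply [Semiring R] (X Y : Matrix ι ι R) (i j k l : ι) :
    (X * single k l (1 : R) * Y) i j = X i k * Y l j := by
  simp [mul_apply, single, ite_and]

/-- The trace of the operator `y ↦ f (y + yᵀ)` on all matrices, in the basis of matrix units. -/
def symmTrace [Semiring R] (f : Matrix ι ι R → Matrix ι ι R) : R :=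
  ∑ i, ∑ j, f (single i j 1 + single j i 1) i j

theorem symmTrace_congr [Semiring R] {f g : Matrix ι ι R → Matrix ι ι R}
    (h : ∀ y, yᵀ = y → f y = g y) : symmTrace f = symmTrace g := by
  refine Finset.sum_congr rfl fun i _ => Finset.sum_congr rfl fun j _ => ?_
  rw [h _ (by rw [transpose_add, transpose_single, transpose_single, add_comm])]

theorem symmTrace_add [Semiring R] (f g : Matrix ι ι R → Matrix ι ι R) :
    symmTrace (fun y => f y + g y) = symmTrace f + symmTrace g := by
  simp only [symmTrace, add_apply, Finset.sum_add_distrib]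

theorem symmTrace_sub [Ring R] (f g : Matrix ι ι R → Matrix ι ι R) :
    symmTrace (fun y => f y - g y) = symmTrace f - symmTrace g := by
  simp only [symmTrace, sub_apply, Finset.sum_sub_distrib]

theorem symmTrace_mul_mul [Semiring R] (X Y : Matrix ι ι R) :
    symmTrace (fun y => X * y * Y) = X.trace * Y.trace + (X * Yᵀ).trace := by
  simp only [symmTrace, mul_add, add_mul, add_apply, mul_single_one_mul_apply,
    Finset.sum_add_distrib]
  simp only [trace, diag, Finset.sum_mul_sum, mul_apply, transpose_apply]

variable [CommRing R] {T : Matrix ι ι R}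

theorem symmTrace_anticomm_anticomm (hT : Tᵀ = T) :
    symmTrace (fun y => T * (T * y + y * T) + (T * y + y * T) * T) =
      2 * ((Fintype.card ι + 2) * (T * T).trace + T.trace ^ 2) := by
  have hexpand : (fun y => T * (T * y + y * T) + (T * y + y * T) * T) =
      fun y => T * T * y * 1 + (T * y * T + T * y * T) + 1 * y * (T * T) := by
    funext y; noncomm_ring
  simp only [hexpand, symmTrace_add, symmTrace_mul_mul]
  simp only [transpose_one, transpose_mul, hT, trace_one, mul_one, one_mul]
  ring

theorem symmTrace_anticomm_sandwiches {A A' B B' : Matrix ι ι R} (hT : Tᵀ = T)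
    (hA : Aᵀ = A) (hA' : A'ᵀ = A') (hB : Bᵀ = B) (hB' : B'ᵀ = B')
    (htrA : A.trace = 0) (htrA' : A'.trace = 0) (htrB : B.trace = 0) (htrB' : B'.trace = 0)
    (hT₁ : A * B' - B * A' = T) (hT₂ : B' * A - A' * B = T) :
    symmTrace (fun y => T * (B' * y * A + A * y * B' - A' * y * B - B * y * A') +
        (B' * y * A + A * y * B' - A' * y * B - B * y * A') * T) = 4 * (T * T).trace := by
  have hexpand : (fun y => T * (B' * y * A + A * y * B' - A' * y * B - B * y * A') +
        (B' * y * A + A * y * B' - A' * y * B - B * y * A') * T) =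
      fun y => (T * B' * y * A + B' * y * (A * T)) + (T * A * y * B' + A * y * (B' * T)) -
        (T * A' * y * B + A' * y * (B * T)) - (T * B * y * A' + B * y * (A' * T)) := by
    funext y; noncomm_ring
  simp only [hexpand, symmTrace_add, symmTrace_sub, symmTrace_mul_mul, transpose_mul, hT, hA,
    hA', hB, hB', htrA, htrA', htrB, htrB', mul_zero, zero_mul, zero_add]
  rw [trace_mul_comm B', trace_mul_comm A, trace_mul_comm A', trace_mul_comm B]
  calc _ = 2 * (T * (B' * A - A' * B)).trace + 2 * (T * (A * B' - B * A')).trace := by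
        simp only [mul_sub, trace_sub, Matrix.mul_assoc]; ring
    _ = 4 * (T * T).trace := by rw [hT₁, hT₂]; ring

end SymmTrace

theorem eq_zero_of_card_mul_trace_mul_self_add_trace_sq_eq_zero {T : Matrix ι ι ℝ} (hT : Tᵀ = T)
    (h : Fintype.card ι * (T * T).trace + T.trace ^ 2 = 0) : T = 0 := by
  rcases isEmpty_or_nonempty ι with hι | hι
  · exact Subsingleton.elim _ _
  have hnonneg : 0 ≤ (T * T).trace := by
    simpa [conjTranspose_eq_transpose_of_trivial, hT] using
      (posSemidef_conjTranspose_mul_self T).trace_nonneg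
  have hcard : (0 : ℝ) < Fintype.card ι := by exact_mod_cast Fintype.card_pos
  have hzero : (Tᴴ * T).trace = 0 := by
    rw [conjTranspose_eq_transpose_of_trivial, hT]
    nlinarith [sq_nonneg T.trace]
  exact trace_conjTranspose_mul_self_eq_zero_iff.mp hzero

end Matrix

theorem stmt_13_general {n : ℕ}
    (A A' B B' : Matrix (Fin n) (Fin n) ℝ)
    (hA : Aᵀ = A) (hA' : A'ᵀ = A') (hB : Bᵀ = B) (hB' : B'ᵀ = B')
    (htrA : A.trace = 0) (htrA' : A'.trace = 0)
    (htrB : B.trace = 0) (htrB' : B'.trace = 0)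
    (h1 : ∀ y : Matrix (Fin n) (Fin n) ℝ, yᵀ = y → ⁅⁅A', y⁆, B⁆ = ⁅⁅B', y⁆, A⁆)
    (h2 : ⁅B, A'⁆ = ⁅A, B'⁆) :
    A * B' = B * A' := by
  rw [← sub_eq_zero]
  generalize hT : A * B' - B * A' = T
  have hT' : B' * A - A' * B = T := hT ▸ mul_sub_mul_eq_of_lie_eq h2
  have hTsymm : Tᵀ = T := by
    rw [← hT, transpose_sub, transpose_mul, transpose_mul, hA, hA', hB, hB', hT', hT]
  have hkey : ∀ y : Matrix (Fin n) (Fin n) ℝ, yᵀ = y →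
      T * y + y * T = B' * y * A + A * y * B' - A' * y * B - B * y * A' := fun y hy => by
    simpa only [hT, hT'] using mul_add_mul_eq_of_lie_lie_eq (h1 y hy)
  have htrace : 2 * ((Fintype.card (Fin n) + 2) * (T * T).trace + T.trace ^ 2) =
      4 * (T * T).trace := by
    rw [← symmTrace_anticomm_anticomm hTsymm,
      ← symmTrace_anticomm_sandwiches hTsymm hA hA' hB hB' htrA htrA' htrB htrB' hT hT']
    exact symmTrace_congr fun y hy => by rw [hkey y hy]
  exact eq_zero_of_card_mul_trace_mul_self_add_trace_sq_eq_zero hTsymm (by linarith)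

/-- For traceless symmetric `A, A', B, B'` with `[[A', y], B] = [[B', y], A]` for all
symmetric `y` and `[B, A'] = [A, B']`, one has `T = AB' − BA' = 0`. -/
theorem stmt_13 {n : ℕ} (hn : 1 ≤ n)
    (A A' B B' : Matrix (Fin n) (Fin n) ℝ)
    (hA : Aᵀ = A) (hA' : A'ᵀ = A') (hB : Bᵀ = B) (hB' : B'ᵀ = B')
    (htrA : A.trace = 0) (htrA' : A'.trace = 0)
    (htrB : B.trace = 0) (htrB' : B'.trace = 0)
    (h1 : ∀ y : Matrix (Fin n) (Fin n) ℝ, yᵀ = y → ⁅⁅A', y⁆, B⁆ = ⁅⁅B', y⁆, A⁆)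
    (h2 : ⁅B, A'⁆ = ⁅A, B'⁆) :
    A * B' = B * A' :=
  stmt_13_general A A' B B' hA hA' hB hB' htrA htrA' htrB htrB' h1 h2
end

section
/- Let A, B, A', B' be symmetric n×n complex matrices with A ≠ 0 such that B'yA + AyB' = ByA' + A'yB for every symmetric matrix y. Then either B = k·A or A' = k·A for some scalar k. -/
/-!
Testing the identity on the rank-one symmetric matrices `y = u uᵀ` gives
`B'u ⊙ Au = Bu ⊙ A'u` for every `u`, and a dual vector killing `Au` but not `Bu` shows that
then `Bu` or `A'u` is parallel to `Au`. Parallelism of `a` and `b` (written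
`vecMulVec a b = vecMulVec b a`: all 2×2 minors vanish) is a polynomial condition in `u`, and
`ℂⁿ` is not the union of two proper algebraic subsets, so one of the two alternatives holds for
every `u`. Finally, if `Au` and `Bu` are always parallel, polarisation makes the quadratic forms
of `A` and `B` proportional, and a symmetric matrix is determined by its quadratic form.
-/

open Matrix MvPolynomial

theorem MvPolynomial.forall_eval_eq_zero_or_forall_eval_eq_zero {R σ ι κ : Type*} [CommRing R]
    [IsDomain R] [Infinite R] (F : ι → MvPolynomial σ R) (G : κ → MvPolynomial σ R)
    (h : ∀ x, (∀ i, eval x (F i) = 0) ∨ ∀ j, eval x (G j) = 0) :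
    (∀ x i, eval x (F i) = 0) ∨ ∀ x j, eval x (G j) = 0 := by
  by_contra! hc
  obtain ⟨⟨x, i, hx⟩, y, j, hy⟩ := hc
  have hFG : F i * G j = 0 := MvPolynomial.funext fun z => by
    rcases h z with hz | hz <;> simp [hz]
  rcases mul_eq_zero.mp hFG with h0 | h0
  · exact hx (by simp [h0])
  · exact hy (by simp [h0])

namespace Matrix

variable {m n R K : Type*} [Fintype n]

section CommRing

variable [CommRing R]

theorem dotProduct_vecMulVec_mulVec [Fintype m] (x a : m → R) (b y : n → R) :
    x ⬝ᵥ vecMulVec a b *ᵥ y = (x ⬝ᵥ a) * (b ⬝ᵥ y) := by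
  rw [vecMulVec_mulVec, op_smul_eq_smul, dotProduct_smul, smul_eq_mul, mul_comm]

theorem mul_vecMulVec_self_mul {M N : Matrix n n R} (hN : N.IsSymm) (u : n → R) :
    M * vecMulVec u u * N = vecMulVec (M *ᵥ u) (N *ᵥ u) := by
  rw [mul_vecMulVec, vecMulVec_mul, ← mulVec_transpose, hN.eq]

theorem IsSymm.dotProduct_mulVec_comm {A : Matrix n n R} (hA : A.IsSymm) (x y : n → R) :
    x ⬝ᵥ A *ᵥ y = y ⬝ᵥ A *ᵥ x := by
  rw [← dotProduct_transpose_mulVec, hA.eq]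

theorem dotProduct_mulVec_self_mul_eq_of_forall_vecMulVec_comm {A B : Matrix n n R}
    (hA : A.IsSymm) (hB : B.IsSymm)
    (h : ∀ u, vecMulVec (A *ᵥ u) (B *ᵥ u) = vecMulVec (B *ᵥ u) (A *ᵥ u)) (x u : n → R) :
    (x ⬝ᵥ A *ᵥ x) * (u ⬝ᵥ B *ᵥ u) = (u ⬝ᵥ A *ᵥ u) * (x ⬝ᵥ B *ᵥ x) := by
  have key : ∀ w, (x ⬝ᵥ A *ᵥ w) * (u ⬝ᵥ B *ᵥ w) = (x ⬝ᵥ B *ᵥ w) * (u ⬝ᵥ A *ᵥ w) := fun w => by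
    simpa only [dotProduct_vecMulVec_mulVec, dotProduct_comm _ u] using
      congrArg (x ⬝ᵥ · *ᵥ u) (h w)
  have hx := key x
  have hu := key u
  -- polarisation: the cross terms of `key (x + u)` are `key x` and `key u`
  have hxu := key (x + u)
  simp only [mulVec_add, dotProduct_add] at hxu
  rw [hA.dotProduct_mulVec_comm u x, hB.dotProduct_mulVec_comm u x] at hx hxu
  linear_combination hxu - hx - hu

theorem eval_map_C_mulVec_X (M : Matrix m n R) (u : n → R) (i : m) :
    eval u ((M.map C *ᵥ X) i) = (M *ᵥ u) i := by
  rw [RingHom.map_mulVec, map_map]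
  congr
  · ext; simp
  · ext; simp

/-- The entries of `Mu ∧ Nu`, as polynomials in `u`. -/
noncomputable def wedgePoly (M N : Matrix m n R) (ij : m × m) : MvPolynomial n R :=
  (M.map C *ᵥ X) ij.1 * (N.map C *ᵥ X) ij.2 - (N.map C *ᵥ X) ij.1 * (M.map C *ᵥ X) ij.2

theorem vecMulVec_comm_iff_forall_eval_wedgePoly {M N : Matrix m n R} {u : n → R} :
    vecMulVec (M *ᵥ u) (N *ᵥ u) = vecMulVec (N *ᵥ u) (M *ᵥ u) ↔
      ∀ ij, eval u (wedgePoly M N ij) = 0 := by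
  simp only [wedgePoly, map_sub, map_mul, eval_map_C_mulVec_X, sub_eq_zero, Prod.forall,
    ← ext_iff, vecMulVec_apply]

theorem forall_vecMulVec_comm_or_forall [IsDomain R] [Infinite R] {M N M' N' : Matrix m n R}
    (h : ∀ u, vecMulVec (M *ᵥ u) (N *ᵥ u) = vecMulVec (N *ᵥ u) (M *ᵥ u) ∨
      vecMulVec (M' *ᵥ u) (N' *ᵥ u) = vecMulVec (N' *ᵥ u) (M' *ᵥ u)) :
    (∀ u, vecMulVec (M *ᵥ u) (N *ᵥ u) = vecMulVec (N *ᵥ u) (M *ᵥ u)) ∨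
      ∀ u, vecMulVec (M' *ᵥ u) (N' *ᵥ u) = vecMulVec (N' *ᵥ u) (M' *ᵥ u) := by
  simp only [vecMulVec_comm_iff_forall_eval_wedgePoly] at h ⊢
  exact forall_eval_eq_zero_or_forall_eval_eq_zero _ _ h

end CommRing

variable [Field K] [DecidableEq n] [NeZero (2 : K)]

theorem IsSymm.eq_zero_of_forall_dotProduct_mulVec_self {M : Matrix n n K} (hM : M.IsSymm)
    (h : ∀ x, x ⬝ᵥ M *ᵥ x = 0) : M = 0 := by
  ext i j
  have hii := h (Pi.single i 1)
  have hjj := h (Pi.single j 1)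
  have hij := h (Pi.single i 1 + Pi.single j 1)
  simp only [mulVec_add, add_dotProduct, dotProduct_add, mulVec_single_one, single_dotProduct,
    col_apply, one_mul] at hii hjj hij
  rw [hM.apply i j, hii, hjj] at hij
  have h2 : (2 : K) * M i j = 0 := by linear_combination hij
  exact (mul_eq_zero.mp h2).resolve_left two_ne_zero

theorem vecMulVec_comm_or_of_add_eq {a p b q : n → K}
    (h : vecMulVec p a + vecMulVec a p = vecMulVec b q + vecMulVec q b) :
    vecMulVec a b = vecMulVec b a ∨ vecMulVec a q = vecMulVec q a := by
  refine or_iff_not_imp_left.mpr fun hab => ?_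
  obtain ⟨i, j, hij⟩ : ∃ i j, a i * b j ≠ b i * a j := by
    by_contra! hc
    exact hab (ext hc)
  set w : n → K := a i • Pi.single j 1 - a j • Pi.single i 1
  have haw : a ⬝ᵥ w = 0 := by simp [w, dotProduct_sub, mul_comm]
  set c := b ⬝ᵥ w with hc_def
  have hc : c ≠ 0 := by
    simpa [c, w, dotProduct_sub, sub_eq_zero, mul_comm (b i)] using hij
  have hw : (p ⬝ᵥ w) • a = (q ⬝ᵥ w) • b + c • q := by
    simpa [add_mulVec, vecMulVec_mulVec, haw] using congrArg (· *ᵥ w) h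
  have hqw : q ⬝ᵥ w = 0 := by
    have := congrArg (w ⬝ᵥ ·) hw
    simp only [dotProduct_smul, dotProduct_add, smul_eq_mul] at this
    rw [dotProduct_comm w a, dotProduct_comm w b, dotProduct_comm w q, haw, ← hc_def] at this
    have h2 : (2 * c) * (q ⬝ᵥ w) = 0 := by linear_combination -this
    exact (mul_eq_zero.mp h2).resolve_left (mul_ne_zero two_ne_zero hc)
  have hq : q = (c⁻¹ * (p ⬝ᵥ w)) • a := by
    rw [hqw, zero_smul, zero_add] at hw
    rw [mul_smul, hw, smul_smul, inv_mul_cancel₀ hc, one_smul]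
  ext k l
  simp only [hq, vecMulVec_apply, Pi.smul_apply, smul_eq_mul]
  ring

theorem IsSymm.exists_eq_smul_of_forall_vecMulVec_comm {A B : Matrix n n K} (hA : A.IsSymm)
    (hB : B.IsSymm) (hA0 : A ≠ 0)
    (h : ∀ u, vecMulVec (A *ᵥ u) (B *ᵥ u) = vecMulVec (B *ᵥ u) (A *ᵥ u)) :
    ∃ k : K, B = k • A := by
  obtain ⟨x, hx⟩ : ∃ x, x ⬝ᵥ A *ᵥ x ≠ 0 := by
    by_contra! hc
    exact hA0 (hA.eq_zero_of_forall_dotProduct_mulVec_self hc)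
  refine ⟨(x ⬝ᵥ B *ᵥ x) / (x ⬝ᵥ A *ᵥ x), (sub_eq_zero.mp ?_)⟩
  refine (hB.sub (hA.smul _)).eq_zero_of_forall_dotProduct_mulVec_self fun u => ?_
  rw [sub_mulVec, smul_mulVec, dotProduct_sub, dotProduct_smul, smul_eq_mul]
  field_simp
  linear_combination dotProduct_mulVec_self_mul_eq_of_forall_vecMulVec_comm hA hB h x u

end Matrix

/-- If symmetric complex matrices satisfy `B'yA + AyB' = ByA' + A'yB` for all symmetric
`y`, and `A ≠ 0`, then `B = k·A` or `A' = k·A` for some scalar `k`. -/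
theorem stmt_14 {n : ℕ}
    (A A' B B' : Matrix (Fin n) (Fin n) ℂ)
    (hA : Aᵀ = A) (hA' : A'ᵀ = A') (hB : Bᵀ = B) (hB' : B'ᵀ = B')
    (hAne : A ≠ 0)
    (h : ∀ y : Matrix (Fin n) (Fin n) ℂ, yᵀ = y →
      B' * y * A + A * y * B' = B * y * A' + A' * y * B) :
    (∃ k : ℂ, B = k • A) ∨ (∃ k : ℂ, A' = k • A) := by
  have rank_one : ∀ u : Fin n → ℂ,
      vecMulVec (A *ᵥ u) (B *ᵥ u) = vecMulVec (B *ᵥ u) (A *ᵥ u) ∨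
        vecMulVec (A *ᵥ u) (A' *ᵥ u) = vecMulVec (A' *ᵥ u) (A *ᵥ u) := fun u => by
    have hu := h (vecMulVec u u) (transpose_vecMulVec u u)
    rw [mul_vecMulVec_self_mul hA, mul_vecMulVec_self_mul hB', mul_vecMulVec_self_mul hA',
      mul_vecMulVec_self_mul hB] at hu
    exact vecMulVec_comm_or_of_add_eq hu
  rcases forall_vecMulVec_comm_or_forall rank_one with hAB | hAA'
  · exact Or.inl (IsSymm.exists_eq_smul_of_forall_vecMulVec_comm hA hB hAne hAB)
  · exact Or.inr (IsSymm.exists_eq_smul_of_forall_vecMulVec_comm hA hA' hAne hAA')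
end

section
/- Let φ : V → V be a linear operator on a finite-dimensional complex vector space with invariant subspace U ⊂ V, let λ be an eigenvalue of φ, and let V_λ be the generalized λ-eigenspace of φ. Then λ is an eigenvalue of the induced operator φ̃ : V/U → V/U if and only if V_λ is not contained in U. -/
open Filter LinearMap

/-- For `φ : V → V` with invariant subspace `U`, an eigenvalue `λ` of `φ` is an eigenvalue
of the induced operator on `V/U` iff the generalized `λ`-eigenspace is not contained in `U`. -/
theorem stmt_16 {V : Type*} [AddCommGroup V] [Module ℂ V] [FiniteDimensional ℂ V]
    (φ : Module.End ℂ V) (U : Submodule ℂ V) (hU : U ≤ U.comap φ)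
    (μ : ℂ) (hμ : φ.HasEigenvalue μ) :
    Module.End.HasEigenvalue (Submodule.mapQ U U φ hU) μ ↔
      ¬ (φ.genEigenspace μ (Module.finrank ℂ V) ≤ U) := by
  set n := Module.finrank ℂ V with hn
  set ψ := Submodule.mapQ U U φ hU with hψ
  set g : Module.End ℂ V := φ - μ • 1 with hg
  set h : Module.End ℂ (V ⧸ U) := ψ - μ • 1 with hh
  have hstep : ∀ v : V, h (U.mkQ v) = U.mkQ (g v) := by
    intro v
    simp [hh, hg, hψ, LinearMap.sub_apply, Submodule.mapQ_apply, Submodule.mkQ_apply,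
      Submodule.Quotient.mk_smul, Submodule.Quotient.mk_sub]
  have key : ∀ (k : ℕ) (v : V), (h ^ k) (U.mkQ v) = U.mkQ ((g ^ k) v) := by
    intro k
    induction k with
    | zero => intro v; simp
    | succ k ih =>
      intro v
      rw [pow_succ, Module.End.mul_apply, hstep, ih, ← Module.End.mul_apply, ← pow_succ]
  have hgen : φ.genEigenspace μ (n : ℕ∞) = LinearMap.ker (g ^ n) :=
    Module.End.genEigenspace_nat
  constructor
  · intro hE hle
    obtain ⟨xb, hxb⟩ := hE.exists_hasEigenvector
    obtain ⟨x, rfl⟩ := U.mkQ_surjective xb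
    have hxU : x ∉ U := by
      intro hx
      exact hxb.2 ((Submodule.Quotient.mk_eq_zero U).mpr hx)
    have hx0 : h (U.mkQ x) = 0 := by
      have := hxb.apply_eq_smul
      simp only [hh, LinearMap.sub_apply, LinearMap.smul_apply, Module.End.one_apply]
      rw [this]; simp
    obtain ⟨N₀, hN₀⟩ := eventually_atTop.mp g.eventually_codisjoint_ker_pow_range_pow
    obtain ⟨N₁, hN₁⟩ := eventually_atTop.mp h.eventually_disjoint_ker_pow_range_pow
    set N := max (max N₀ N₁) n + 1 with hN
    have hNn : n ≤ N := le_trans (le_max_right _ _) (Nat.le_succ _)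
    have hker : LinearMap.ker (g ^ N) ≤ U := by
      rw [Module.End.ker_pow_eq_ker_pow_finrank_of_le hNn, ← hgen]
      exact hle
    have hco := hN₀ N (le_trans (le_trans (le_max_left _ _) (le_max_left _ _)) (Nat.le_succ _))
    have hdis := hN₁ N (le_trans (le_trans (le_max_right _ _) (le_max_left _ _)) (Nat.le_succ _))
    -- decompose x
    have hx : x ∈ LinearMap.ker (g ^ N) ⊔ LinearMap.range (g ^ N) := by
      rw [codisjoint_iff.mp hco]; trivial
    obtain ⟨a, ha, b, hb, rfl⟩ := Submodule.mem_sup.mp hx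
    obtain ⟨c, rfl⟩ := hb
    have ha0 : U.mkQ a = 0 := (Submodule.Quotient.mk_eq_zero U).mpr (hker ha)
    have hmk : U.mkQ (a + (g ^ N) c) = (h ^ N) (U.mkQ c) := by
      rw [map_add, ha0, zero_add, key]
    have hmem_range : U.mkQ (a + (g ^ N) c) ∈ LinearMap.range (h ^ N) :=
      hmk ▸ LinearMap.mem_range_self _ _
    have hmem_ker : U.mkQ (a + (g ^ N) c) ∈ LinearMap.ker (h ^ N) := by
      rw [LinearMap.mem_ker, hN, pow_succ, Module.End.mul_apply, hx0, map_zero]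
    have : U.mkQ (a + (g ^ N) c) = 0 :=
      (Submodule.mem_bot ℂ).mp (hdis.le_bot ⟨hmem_ker, hmem_range⟩)
    exact hxU ((Submodule.Quotient.mk_eq_zero U).mp this)
  · intro hle
    obtain ⟨v, hv, hvU⟩ := SetLike.not_le_iff_exists.mp hle
    have hv0 : (h ^ n) (U.mkQ v) = 0 := by
      rw [key]
      have : (g ^ n) v = 0 := by
        rw [hgen] at hv; exact hv
      rw [this, map_zero]
    have hne : Module.End.HasUnifEigenvalue ψ μ (n : ℕ∞) := by
      show Module.End.genEigenspace ψ μ (n : ℕ∞) ≠ ⊥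
      rw [Module.End.genEigenspace_nat]
      refine Submodule.ne_bot_iff _ |>.mpr ⟨U.mkQ v, hv0, ?_⟩
      exact fun h0 => hvU ((Submodule.Quotient.mk_eq_zero U).mp h0)
    exact Module.End.HasUnifEigenvalue.lt zero_lt_one hne
end

section
/- Let A be a diagonalizable g-symmetric endomorphism with distinct eigenvalues λ₁,…,λ_s, let p be a polynomial and R₀(X) = d/dt|_{t=0} p(A + tX). For i ≠ j, any eigenvector v of A with eigenvalue λ_i and eigenvector u with eigenvalue λ_j, the element X = v ∧ u ∈ so(g) satisfies R₀(X) = ((p(λ_i) − p(λ_j))/(λ_i − λ_j)) · X; in particular (p(λ_i)−p(λ_j))/(λ_i−λ_j) is an eigenvalue of R₀ whenever v ∧ u ≠ 0. -/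
/-- For eigenvectors `v, u` of the `g`-symmetric `A` with distinct eigenvalues `λᵢ ≠ λⱼ`,
the element `X = v ∧ u` satisfies `R₀(X) = ((p(λᵢ) − p(λⱼ))/(λᵢ − λⱼ)) • X`; in particular
this quotient is an eigenvalue of `R₀` whenever `v ∧ u ≠ 0`. -/
theorem stmt_17 {V : Type*} [AddCommGroup V] [Module ℝ V] [FiniteDimensional ℝ V]
    (g : LinearMap.BilinForm ℝ V) (hgnd : g.Nondegenerate) (hgsymm : g.IsSymm)
    (A : Module.End ℝ V) (hA : ∀ u v : V, g (A u) v = g u (A v))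
    (p : Polynomial ℝ) (lami lamj : ℝ) (hij : lami ≠ lamj)
    (v u : V) (hv : A v = lami • v) (hu : A u = lamj • u) :
    R0 p A (wedge g v u) =
        ((p.eval lami - p.eval lamj) / (lami - lamj)) • wedge g v u ∧
      (wedge g v u ≠ 0 → ∃ X : Module.End ℝ V, X ≠ 0 ∧
        R0 p A X = ((p.eval lami - p.eval lamj) / (lami - lamj)) • X) := by
  have hd : lami - lamj ≠ 0 := sub_ne_zero.mpr hij
  have hAv : ∀ n : ℕ, (A ^ n) v = lami ^ n • v := by
    intro n
    induction n with
    | zero => simp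
    | succ n ih =>
      rw [pow_succ', Module.End.mul_apply, ih, map_smul, hv, smul_smul, pow_succ', mul_comm]
  have hAu : ∀ n : ℕ, (A ^ n) u = lamj ^ n • u := by
    intro n
    induction n with
    | zero => simp
    | succ n ih =>
      rw [pow_succ', Module.End.mul_apply, ih, map_smul, hu, smul_smul, pow_succ', mul_comm]
  have hApow : ∀ (n : ℕ) (a b : V), g ((A ^ n) a) b = g a ((A ^ n) b) := by
    intro n
    induction n with
    | zero => simp
    | succ n ih =>
      intro a b
      have h1 : (A ^ (n + 1)) a = A ((A ^ n) a) := by rw [pow_succ']; rfl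
      have h2 : (A ^ (n + 1)) b = (A ^ n) (A b) := by rw [pow_succ]; rfl
      rw [h1, hA, ih, h2]
  have hgu : ∀ (j : ℕ) (x : V), g u ((A ^ j) x) = lamj ^ j * g u x := by
    intro j x
    rw [← hApow, hAu, map_smul]; rfl
  have hgv : ∀ (j : ℕ) (x : V), g v ((A ^ j) x) = lami ^ j * g v x := by
    intro j x
    rw [← hApow, hAv, map_smul]; rfl
  have hterm1 : ∀ m j : ℕ, A ^ m * ((g u).smulRight v) * A ^ j
      = (lami ^ m * lamj ^ j) • ((g u).smulRight v) := by
    intro m j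
    ext x
    simp only [Module.End.mul_apply, LinearMap.smulRight_apply, LinearMap.smul_apply,
      hgu, map_smul, hAv, smul_smul]
    congr 1
    ring
  have hterm2 : ∀ m j : ℕ, A ^ m * ((g v).smulRight u) * A ^ j
      = (lamj ^ m * lami ^ j) • ((g v).smulRight u) := by
    intro m j
    ext x
    simp only [Module.End.mul_apply, LinearMap.smulRight_apply, LinearMap.smul_apply,
      hgv, map_smul, hAu, smul_smul]
    congr 1
    ring
  set c : ℕ → ℝ := fun k => (lami ^ k - lamj ^ k) / (lami - lamj) with hc
  have e1 : ∀ k : ℕ, ∑ j ∈ Finset.range k, lami ^ (k - 1 - j) * lamj ^ j = c k := by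
    intro k
    rw [hc, eq_div_iff hd]
    have h := geom_sum₂_mul lamj lami k
    have h2 : ∑ j ∈ Finset.range k, lami ^ (k - 1 - j) * lamj ^ j
        = ∑ j ∈ Finset.range k, lamj ^ j * lami ^ (k - 1 - j) :=
      Finset.sum_congr rfl fun j _ => mul_comm _ _
    rw [h2]
    linear_combination -h
  have e2 : ∀ k : ℕ, ∑ j ∈ Finset.range k, lamj ^ (k - 1 - j) * lami ^ j = c k := by
    intro k
    rw [hc, eq_div_iff hd]
    have h := geom_sum₂_mul lami lamj k
    have h2 : ∑ j ∈ Finset.range k, lamj ^ (k - 1 - j) * lami ^ j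
        = ∑ j ∈ Finset.range k, lami ^ j * lamj ^ (k - 1 - j) :=
      Finset.sum_congr rfl fun j _ => mul_comm _ _
    rw [h2, h]
  have hsum : ∀ k : ℕ, ∑ j ∈ Finset.range k, A ^ (k - 1 - j) * (wedge g v u) * A ^ j
      = c k • wedge g v u := by
    intro k
    have : ∀ j : ℕ, A ^ (k - 1 - j) * (wedge g v u) * A ^ j
        = (lami ^ (k - 1 - j) * lamj ^ j) • ((g u).smulRight v)
          - (lamj ^ (k - 1 - j) * lami ^ j) • ((g v).smulRight u) := by
      intro j
      rw [wedge, mul_sub, sub_mul, hterm1, hterm2]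
    simp only [this, Finset.sum_sub_distrib, ← Finset.sum_smul, e1, e2]
    rw [wedge, smul_sub]
  have main : R0 p A (wedge g v u)
      = ((p.eval lami - p.eval lamj) / (lami - lamj)) • wedge g v u := by
    rw [R0, Polynomial.sum_def]
    simp only [hsum, smul_smul, ← Finset.sum_smul]
    congr 1
    rw [Polynomial.eval_eq_sum, Polynomial.eval_eq_sum, Polynomial.sum_def, Polynomial.sum_def,
      ← Finset.sum_sub_distrib, Finset.sum_div]
    exact Finset.sum_congr rfl fun k _ => by rw [hc]; ring
  exact ⟨main, fun h => ⟨wedge g v u, h, main⟩⟩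
end
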